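/- Let d ≥ 1, σ ∈ (−d,0) and let E ⊆ ℝ^d be measurable with finite Lebesgue measure. Then for every x ∈ ℝ^d, lim_{r→0⁺} j^σ_r(x,E) = −∫_E |x−y|^{−(d+σ)} dy − dω_d/σ, and lim_{r→0⁺} Ĵ^σ_r(E) = Ĵ^σ(E), where J^σ(E) := −∫_E ∫_E |x−y|^{−(d+σ)} dy dx and Ĵ^σ(E) := J^σ(E) − (dω_d/σ)|E| ∈ ℝ. -/

import Mathlib

open MeasureTheory Metric Filter Topology ENNReal
open scoped symmDiff

noncomputable section

abbrev Rd (d : ℕ) := EuclideanSpace ℝ (Fin d)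

/-- Lebesgue measure of the unit ball in `ℝ^d`. -/
def omegaD (d : ℕ) : ℝ := (volume (ball (0 : Rd d) 1)).toReal

/-- The kernel `|x-y|^{-(d+σ)}`. -/
def kerH (d : ℕ) (σ : ℝ) (x y : Rd d) : ℝ := ‖x - y‖ ^ (-((d : ℝ) + σ))

/-- `J^σ_r(E) = -∫_E ∫_{E∖B_r(x)} |x-y|^{-(d+σ)} dy dx`. -/
def Jfun (d : ℕ) (σ r : ℝ) (E : Set (Rd d)) : ℝ :=
  -∫ x in E, ∫ y in E \ ball x r, kerH d σ x y

/-- The renormalization constant `γ^σ_ρ`. -/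
def gam (d : ℕ) (σ ρ : ℝ) : ℝ :=
  if σ = 0 then d * omegaD d * Real.log ρ else d * omegaD d * (1 - ρ ^ (-σ)) / σ

/-- `Ĵ^σ_r(E) = J^σ_r(E) - γ^σ_r |E|`. -/
def Jhat (d : ℕ) (σ r : ℝ) (E : Set (Rd d)) : ℝ :=
  Jfun d σ r E - gam d σ r * (volume E).toReal

/-- `j^σ_r(x,E) = -∫_{E∖B_r(x)} |x-y|^{-(d+σ)} dy - γ^σ_r`. -/
def jfun (d : ℕ) (σ r : ℝ) (x : Rd d) (E : Set (Rd d)) : ℝ :=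
  -(∫ y in E \ ball x r, kerH d σ x y) - gam d σ r

/-- `J^σ(E) = -∫_E ∫_E |x-y|^{-(d+σ)} dy dx`. -/
def JfunFull (d : ℕ) (σ : ℝ) (E : Set (Rd d)) : ℝ :=
  -∫ x in E, ∫ y in E, kerH d σ x y

/-- `γ^σ = d ω_d / σ`. -/
def gamFull (d : ℕ) (σ : ℝ) : ℝ := d * omegaD d / σ

/-!
For `-d < σ < 0` the kernel `|x - y|^{-(d+σ)}` is integrable near the diagonal (the exponent
exceeds `-d`) and at most `1` away from it, so `y ↦ |x - y|^{-(d+σ)}` is integrable on `E` with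
integral bounded uniformly in `x`. Cutting out `B_r(x)` changes the inner integral by the integral
over `E ∩ B_r(x)`, which tends to `0` by absolute continuity since `|B_r(x)| → 0`; dominated
convergence in `x` then handles the outer integral, and `γ^σ_r → dω_d/σ` because `r^{-σ} → 0`.
-/

open Set Function

section TruncatedIntegral

variable {X G : Type*} [MetricSpace X] [MeasurableSpace X] [BorelSpace X]
  [NormedAddCommGroup G] [NormedSpace ℝ G] {μ : Measure X} {s : Set X}

theorem stronglyMeasurable_setIntegral_diff_ball [SecondCountableTopology X] [SFinite μ]
    {K : X → X → G} (hK : StronglyMeasurable (uncurry K)) (hs : MeasurableSet s) (r : ℝ) :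
    StronglyMeasurable fun x => ∫ y in s \ ball x r, K x y ∂μ := by
  let T : Set (X × X) := {q | q.2 ∈ s ∧ r ≤ dist q.2 q.1}
  have hT : MeasurableSet T :=
    (measurable_snd hs).inter
      (isClosed_le continuous_const (continuous_snd.dist continuous_fst)).measurableSet
  convert (hK.indicator hT).integral_prod_right' (ν := μ) using 1
  funext x
  rw [← integral_indicator (hs.diff measurableSet_ball)]
  congr 1
  funext y
  have hmem : (x, y) ∈ T ↔ y ∈ s \ ball x r := by simp [T, mem_ball, not_lt]
  by_cases h : y ∈ s \ ball x r
  · rw [indicator_of_mem h, indicator_of_mem (hmem.2 h)]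
    rfl
  · rw [indicator_of_notMem h, indicator_of_notMem (mt hmem.1 h)]

variable [ProperSpace X] [IsFiniteMeasureOnCompacts μ] [NullSingletonClass μ]

theorem tendsto_measure_ball_nhdsGT_zero (x : X) :
    Tendsto (fun r => μ (ball x r)) (𝓝[>] 0) (𝓝 0) := by
  have h := tendsto_measure_thickening_of_isClosed (μ := μ)
    ⟨1, one_pos, by simpa only [thickening_singleton] using measure_ball_lt_top.ne⟩
    (isClosed_singleton (x := x))
  simpa only [thickening_singleton, measure_singleton] using h

theorem tendsto_setIntegral_diff_ball {f : X → G} (hf : IntegrableOn f s μ) (x : X) :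
    Tendsto (fun r => ∫ y in s \ ball x r, f y ∂μ) (𝓝[>] 0) (𝓝 (∫ y in s, f y ∂μ)) := by
  have hsmall : Tendsto (fun r => ∫ y in s ∩ ball x r, f y ∂μ) (𝓝[>] 0) (𝓝 0) := by
    have hμ : Tendsto (fun r => μ.restrict s (ball x r)) (𝓝[>] 0) (𝓝 0) :=
      tendsto_of_tendsto_of_tendsto_of_le_of_le tendsto_const_nhds
        (tendsto_measure_ball_nhdsGT_zero x) (fun _ => zero_le)
        fun _ => Measure.restrict_apply_le _ _
    simpa only [Measure.restrict_restrict measurableSet_ball, inter_comm]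
      using hf.tendsto_setIntegral_nhds_zero hμ
  refine (sub_zero (∫ y in s, f y ∂μ) ▸ hsmall.const_sub _).congr fun r => ?_
  rw [← integral_inter_add_sdiff measurableSet_ball hf, add_sub_cancel_left]

theorem tendsto_setIntegral_setIntegral_diff_ball {K : X → X → G}
    (hK : StronglyMeasurable (uncurry K)) (hs : MeasurableSet s)
    (hKs : ∀ x ∈ s, IntegrableOn (K x) s μ)
    (hdom : IntegrableOn (fun x => ∫ y in s, ‖K x y‖ ∂μ) s μ) :
    Tendsto (fun r => ∫ x in s, ∫ y in s \ ball x r, K x y ∂μ ∂μ) (𝓝[>] 0)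
      (𝓝 (∫ x in s, ∫ y in s, K x y ∂μ ∂μ)) := by
  refine tendsto_integral_filter_of_dominated_convergence _
    (.of_forall fun r => (stronglyMeasurable_setIntegral_diff_ball hK hs r).aestronglyMeasurable)
    (.of_forall fun r => ?_) hdom ?_
  · filter_upwards [ae_restrict_mem hs] with x hx
    calc ‖∫ y in s \ ball x r, K x y ∂μ‖ ≤ ∫ y in s \ ball x r, ‖K x y‖ ∂μ :=
          norm_integral_le_integral_norm _
      _ ≤ ∫ y in s, ‖K x y‖ ∂μ :=
          setIntegral_mono_set (hKs x hx).norm (.of_forall fun _ => norm_nonneg _)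
            sdiff_subset.eventuallyLE
  · filter_upwards [ae_restrict_mem hs] with x hx using tendsto_setIntegral_diff_ball (hKs x hx) x

end TruncatedIntegral

theorem integrable_indicator_ball_norm_rpow {F : Type*} [NormedAddCommGroup F]
    [NormedSpace ℝ F] [FiniteDimensional ℝ F] [MeasurableSpace F] [BorelSpace F] {μ : Measure F}
    [μ.IsAddHaarMeasure] (hF : 1 ≤ Module.finrank ℝ F) {p : ℝ}
    (hp : -(Module.finrank ℝ F : ℝ) < p) (R : ℝ) :
    Integrable ((ball (0 : F) R).indicator (‖·‖ ^ p)) μ := by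
  rw [integrable_indicator_iff measurableSet_ball]
  exact integrableOn_ball_of_norm_le_rpow hF (C := 1) (α := -p) (by linarith)
    (.of_forall fun z => by simp [abs_of_nonneg (Real.rpow_nonneg (norm_nonneg z) p)])
    (measurable_norm.pow_const p).aestronglyMeasurable

section Kernel

variable {d : ℕ} {σ : ℝ}

theorem kerH_nonneg (x y : Rd d) : 0 ≤ kerH d σ x y :=
  Real.rpow_nonneg (norm_nonneg _) _

theorem measurable_kerH : Measurable (uncurry (kerH d σ)) := by
  unfold kerH
  fun_prop

theorem kerH_le_indicator_add_one (hσ : -(d : ℝ) ≤ σ) (x y : Rd d) :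
    kerH d σ x y ≤ (ball (0 : Rd d) 1).indicator (‖·‖ ^ (-((d : ℝ) + σ))) (x - y) + 1 := by
  by_cases h : x - y ∈ ball (0 : Rd d) 1
  · rw [indicator_of_mem h]
    exact le_add_of_nonneg_right zero_le_one
  · rw [indicator_of_notMem h, zero_add]
    exact Real.rpow_le_one_of_one_le_of_nonpos (by simpa using h) (by linarith)

theorem integrableOn_kerH_majorant (hd : 1 ≤ d) (hσ : σ < 0) {E : Set (Rd d)}
    (hE : volume E ≠ ⊤) (x : Rd d) :
    IntegrableOn (fun y => (ball (0 : Rd d) 1).indicator (‖·‖ ^ (-((d : ℝ) + σ))) (x - y) + 1)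
      E := by
  have hball : Integrable ((ball (0 : Rd d) 1).indicator (‖·‖ ^ (-((d : ℝ) + σ)))) :=
    integrable_indicator_ball_norm_rpow (by simpa using hd) (by simp; linarith) 1
  exact (hball.comp_sub_left x).integrableOn.add (integrableOn_const hE)

theorem integrableOn_kerH (hd : 1 ≤ d) (hσ₁ : -(d : ℝ) ≤ σ) (hσ₂ : σ < 0) {E : Set (Rd d)}
    (hE : volume E ≠ ⊤) (x : Rd d) : IntegrableOn (kerH d σ x) E :=
  (integrableOn_kerH_majorant hd hσ₂ hE x).mono'
    measurable_kerH.of_uncurry_left.aestronglyMeasurable (.of_forall fun y => by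
      rw [Real.norm_of_nonneg (kerH_nonneg x y)]
      exact kerH_le_indicator_add_one hσ₁ x y)

theorem setIntegral_kerH_le (hd : 1 ≤ d) (hσ₁ : -(d : ℝ) ≤ σ) (hσ₂ : σ < 0) {E : Set (Rd d)}
    (hE : volume E ≠ ⊤) (x : Rd d) :
    ∫ y in E, kerH d σ x y ≤
      (∫ z in ball (0 : Rd d) 1, ‖z‖ ^ (-((d : ℝ) + σ))) + volume.real E := by
  set g := (ball (0 : Rd d) 1).indicator (‖·‖ ^ (-((d : ℝ) + σ)))
  have hg : Integrable g :=
    integrable_indicator_ball_norm_rpow (by simpa using hd) (by simp; linarith) 1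
  calc ∫ y in E, kerH d σ x y ≤ ∫ y in E, (g (x - y) + 1) :=
        setIntegral_mono (integrableOn_kerH hd hσ₁ hσ₂ hE x)
          (integrableOn_kerH_majorant hd hσ₂ hE x) (kerH_le_indicator_add_one hσ₁ x)
    _ = (∫ y in E, g (x - y)) + volume.real E := by
        rw [integral_add (hg.comp_sub_left x).integrableOn (integrableOn_const hE),
          setIntegral_const, smul_eq_mul, mul_one]
    _ ≤ (∫ y, g (x - y)) + volume.real E :=
        add_le_add_left (setIntegral_le_integral (hg.comp_sub_left x) (.of_forall fun y =>
          indicator_nonneg (fun z _ => Real.rpow_nonneg (norm_nonneg z) _) _)) _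
    _ = (∫ z in ball (0 : Rd d) 1, ‖z‖ ^ (-((d : ℝ) + σ))) + volume.real E := by
        rw [integral_sub_left_eq_self, integral_indicator measurableSet_ball]

theorem integrableOn_setIntegral_norm_kerH (hd : 1 ≤ d) (hσ₁ : -(d : ℝ) ≤ σ) (hσ₂ : σ < 0)
    {E : Set (Rd d)} (hE : volume E ≠ ⊤) :
    IntegrableOn (fun x => ∫ y in E, ‖kerH d σ x y‖) E := by
  refine Measure.integrableOn_of_bounded hE
    (measurable_kerH.norm.stronglyMeasurable.integral_prod_right).aestronglyMeasurable
    (M := (∫ z in ball (0 : Rd d) 1, ‖z‖ ^ (-((d : ℝ) + σ))) + volume.real E)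
    (.of_forall fun x => ?_)
  rw [Real.norm_of_nonneg (integral_nonneg fun _ => norm_nonneg _)]
  simp_rw [Real.norm_of_nonneg (kerH_nonneg x _)]
  exact setIntegral_kerH_le hd hσ₁ hσ₂ hE x

theorem tendsto_gam_nhdsGT_zero (hσ : σ < 0) :
    Tendsto (gam d σ) (𝓝[>] 0) (𝓝 (gamFull d σ)) := by
  have hpow : Tendsto (fun r : ℝ => r ^ (-σ)) (𝓝[>] 0) (𝓝 0) := by
    simpa [Real.zero_rpow (neg_ne_zero.2 hσ.ne)] using
      (Real.continuousAt_rpow_const 0 (-σ) (.inr (by linarith))).tendsto.mono_left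
        nhdsWithin_le_nhds
  have h := ((hpow.const_sub 1).const_mul ((d : ℝ) * omegaD d)).div_const σ
  simp only [sub_zero, mul_one] at h
  exact h.congr fun r => by simp [gam, hσ.ne]

end Kernel

theorem j_and_Jhat_limits_of_neg_general
    (d : ℕ) (σ : ℝ) (hσ1 : -(d : ℝ) < σ) (hσ2 : σ < 0)
    (E : Set (Rd d)) (hE : MeasurableSet E) (hEfin : volume E < ⊤) :
    (∀ x : Rd d, Tendsto (fun r => jfun d σ r x E) (𝓝[>] (0 : ℝ))
      (𝓝 (-(∫ y in E, kerH d σ x y) - gamFull d σ))) ∧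
    Tendsto (fun r => Jhat d σ r E) (𝓝[>] (0 : ℝ))
      (𝓝 (JfunFull d σ E - gamFull d σ * (volume E).toReal)) := by
  have hd : 1 ≤ d := by exact_mod_cast (show (0 : ℝ) < d by linarith)
  -- makes `Rd d` nontrivial, so that `volume` has no atoms
  have : Nonempty (Fin d) := ⟨⟨0, hd⟩⟩
  have hint := integrableOn_kerH hd hσ1.le hσ2 hEfin.ne
  have hgam := tendsto_gam_nhdsGT_zero (d := d) hσ2
  refine ⟨fun x => (tendsto_setIntegral_diff_ball (hint x) x).neg.sub hgam, ?_⟩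
  exact (tendsto_setIntegral_setIntegral_diff_ball measurable_kerH.stronglyMeasurable hE
    (fun x _ => hint x) (integrableOn_setIntegral_norm_kerH hd hσ1.le hσ2 hEfin.ne)).neg.sub
    (hgam.mul_const _)

theorem j_and_Jhat_limits_of_neg
    (d : ℕ) (hd : 1 ≤ d) (σ : ℝ) (hσ1 : -(d : ℝ) < σ) (hσ2 : σ < 0)
    (E : Set (Rd d)) (hE : MeasurableSet E) (hEfin : volume E < ⊤) :
    (∀ x : Rd d, Tendsto (fun r => jfun d σ r x E) (𝓝[>] (0 : ℝ))
      (𝓝 (-(∫ y in E, kerH d σ x y) - gamFull d σ))) ∧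
    Tendsto (fun r => Jhat d σ r E) (𝓝[>] (0 : ℝ))
      (𝓝 (JfunFull d σ E - gamFull d σ * (volume E).toReal)) :=
  j_and_Jhat_limits_of_neg_general d σ hσ1 hσ2 E hE hEfin
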